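/- Let l(x,y;θ) = ⟨y, f_θ(x)⟩ with y ranging over the probability simplex in ℝ^m, let F be a non-decreasing concave function with ‖f_θ(x') − f_θ(x)‖_r ≤ F(‖x'−x‖_r) for all x, x', and suppose ‖f_θ(x)‖_∞ ≤ M for all x. Then for any κ ∈ (0,∞) and any z=(x,y), z'=(x',y') with ‖x'−x‖_r + κ‖y'−y‖₁ ≤ t, we have l(x',y';θ) − l(x,y;θ) ≤ sup_{τ ∈ [0,t]} (F(t−τ) + M·κ⁻¹·τ), and the right-hand side is a non-decreasing concave function of t. -/

import Mathlib

/-!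
Write the loss difference as `⟨y', f x' - f x⟩ + ⟨y' - y, f x⟩`. Since `y'` is a probability
vector, the first term is at most `‖f x' - f x‖ ≤ F ‖x' - x‖`, and the second is at most
`M ‖y' - y‖₁ = M κ⁻¹ τ` with `τ = κ ‖y' - y‖₁`; as `‖x' - x‖ ≤ t - τ`, this is one of the
terms in the supremum. The supremum is concave in `t` because a convex combination of splits
`t₁ = (t₁ - τ₁) + τ₁` and `t₂ = (t₂ - τ₂) + τ₂` is a split of the combined budget, and
concavity of `F` bounds the combination of the two values by the value at that split.
-/

open Set ENNReal

noncomputable def supConvLinear (F : ℝ → ℝ) (c t : ℝ) : ℝ :=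
  ⨆ τ : Icc (0 : ℝ) t, (F (t - τ) + c * τ)

lemma Real.iSup_add_iSup_le {ι κ : Sort*} [Nonempty ι] [Nonempty κ] {f : ι → ℝ} {g : κ → ℝ}
    {a : ℝ} (h : ∀ i j, f i + g j ≤ a) : (⨆ i, f i) + (⨆ j, g j) ≤ a := by
  rw [← le_sub_iff_add_le]
  refine ciSup_le fun i => ?_
  rw [le_sub_comm]
  exact ciSup_le fun j => le_sub_iff_add_le'.mpr (h i j)

section SupConvLinear

variable {F : ℝ → ℝ} {c t : ℝ}

lemma bddAbove_supConvLinear (hF : MonotoneOn F (Ici 0)) (ht : 0 ≤ t) :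
    BddAbove (range fun τ : Icc (0 : ℝ) t => F (t - τ) + c * τ) := by
  refine ⟨F t + |c| * t, ?_⟩
  rintro _ ⟨⟨τ, hτ0, hτt⟩, rfl⟩
  have hF_le : F (t - τ) ≤ F t := hF (by simp [hτt]) (by simpa) (by linarith)
  have hc_le : c * τ ≤ |c| * t := by
    calc c * τ ≤ |c| * τ := mul_le_mul_of_nonneg_right (le_abs_self c) hτ0
      _ ≤ |c| * t := mul_le_mul_of_nonneg_left hτt (abs_nonneg c)
  exact add_le_add hF_le hc_le

lemma le_supConvLinear (hF : MonotoneOn F (Ici 0)) {τ : ℝ} (hτ : τ ∈ Icc 0 t) :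
    F (t - τ) + c * τ ≤ supConvLinear F c t :=
  le_ciSup (f := fun τ : Icc (0 : ℝ) t => F (t - τ) + c * τ)
    (bddAbove_supConvLinear hF (hτ.1.trans hτ.2)) ⟨τ, hτ⟩

lemma monotoneOn_supConvLinear (hF : MonotoneOn F (Ici 0)) :
    MonotoneOn (supConvLinear F c) (Ici 0) := by
  intro t₁ (ht₁ : 0 ≤ t₁) t₂ _ h
  have : Nonempty (Icc (0 : ℝ) t₁) := (nonempty_Icc.mpr ht₁).to_subtype
  refine ciSup_le fun ⟨τ, hτ0, hτt⟩ => ?_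
  calc F (t₁ - τ) + c * τ ≤ F (t₂ - τ) + c * τ := by
        gcongr
        exact hF (by simp [hτt]) (by simp; linarith) (by linarith)
    _ ≤ supConvLinear F c t₂ := le_supConvLinear hF ⟨hτ0, hτt.trans h⟩

lemma concaveOn_supConvLinear (hFmono : MonotoneOn F (Ici 0))
    (hFconc : ConcaveOn ℝ (Ici 0) F) : ConcaveOn ℝ (Ici 0) (supConvLinear F c) := by
  refine ⟨convex_Ici 0, fun t₁ (ht₁ : 0 ≤ t₁) t₂ (ht₂ : 0 ≤ t₂) a b ha hb hab => ?_⟩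
  have : Nonempty (Icc (0 : ℝ) t₁) := (nonempty_Icc.mpr ht₁).to_subtype
  have : Nonempty (Icc (0 : ℝ) t₂) := (nonempty_Icc.mpr ht₂).to_subtype
  simp only [smul_eq_mul, supConvLinear, Real.mul_iSup_of_nonneg ha, Real.mul_iSup_of_nonneg hb]
  refine Real.iSup_add_iSup_le fun ⟨τ₁, hτ₁0, hτ₁t⟩ ⟨τ₂, hτ₂0, hτ₂t⟩ => ?_
  have hF_comb := hFconc.2 (x := t₁ - τ₁) (y := t₂ - τ₂) (by simp [hτ₁t]) (by simp [hτ₂t])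
    ha hb hab
  simp only [smul_eq_mul] at hF_comb
  rw [show a * (t₁ - τ₁) + b * (t₂ - τ₂) = (a * t₁ + b * t₂) - (a * τ₁ + b * τ₂) by ring]
    at hF_comb
  have hσ : a * τ₁ + b * τ₂ ∈ Icc 0 (a * t₁ + b * t₂) :=
    ⟨by positivity, by gcongr⟩
  calc a * (F (t₁ - τ₁) + c * τ₁) + b * (F (t₂ - τ₂) + c * τ₂)
      = (a * F (t₁ - τ₁) + b * F (t₂ - τ₂)) + c * (a * τ₁ + b * τ₂) := by ring
    _ ≤ F ((a * t₁ + b * t₂) - (a * τ₁ + b * τ₂)) + c * (a * τ₁ + b * τ₂) := by gcongr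
    _ ≤ supConvLinear F c (a * t₁ + b * t₂) := le_supConvLinear hFmono hσ

end SupConvLinear

lemma sum_mul_le_norm_of_mem_stdSimplex {ι : Type*} [Fintype ι] {r : ℝ≥0∞} [Fact (1 ≤ r)]
    {y : ι → ℝ} (hy0 : ∀ j, 0 ≤ y j) (hy1 : ∑ j, y j = 1) (v : PiLp r (fun _ : ι => ℝ)) :
    ∑ j, y j * v j ≤ ‖v‖ :=
  calc ∑ j, y j * v j ≤ ∑ j, y j * ‖v‖ :=
        Finset.sum_le_sum fun j _ =>
          mul_le_mul_of_nonneg_left ((le_abs_self _).trans (PiLp.norm_apply_le v j)) (hy0 j)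
    _ = ‖v‖ := by rw [← Finset.sum_mul, hy1, one_mul]

lemma sum_mul_le_sum_abs_mul_of_abs_le {ι : Type*} [Fintype ι] {u w : ι → ℝ} {M : ℝ}
    (hw : ∀ j, |w j| ≤ M) : ∑ j, u j * w j ≤ (∑ j, |u j|) * M := by
  rw [Finset.sum_mul]
  refine Finset.sum_le_sum fun j _ => ?_
  calc u j * w j ≤ |u j * w j| := le_abs_self _
    _ = |u j| * |w j| := abs_mul _ _
    _ ≤ |u j| * M := mul_le_mul_of_nonneg_left (hw j) (abs_nonneg _)

lemma sum_mul_sub_sum_mul_le_supConvLinear {X ι : Type*} [SeminormedAddCommGroup X] [Fintype ι]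
    {r : ℝ≥0∞} [Fact (1 ≤ r)] {f : X → PiLp r (fun _ : ι => ℝ)} {F : ℝ → ℝ}
    (hFmono : MonotoneOn F (Ici 0)) (hF : ∀ x x', ‖f x' - f x‖ ≤ F ‖x' - x‖)
    {M : ℝ} (hM : ∀ x j, |f x j| ≤ M) {κ : ℝ} (hκ : 0 < κ) {t : ℝ} {x x' : X} {y y' : ι → ℝ}
    (hy'0 : ∀ j, 0 ≤ y' j) (hy'1 : ∑ j, y' j = 1)
    (ht : ‖x' - x‖ + κ * ∑ j, |y' j - y j| ≤ t) :
    (∑ j, y' j * f x' j) - (∑ j, y j * f x j) ≤ supConvLinear F (M * κ⁻¹) t := by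
  set τ := κ * ∑ j, |y' j - y j|
  have hτ : τ ∈ Icc 0 t :=
    ⟨by positivity, by linarith [norm_nonneg (x' - x)]⟩
  have hsplit : (∑ j, y' j * f x' j) - (∑ j, y j * f x j) =
      (∑ j, y' j * (f x' - f x) j) + ∑ j, (y' j - y j) * f x j := by
    simp only [PiLp.sub_apply, ← Finset.sum_sub_distrib, ← Finset.sum_add_distrib]
    exact Finset.sum_congr rfl fun j _ => by ring
  have hinput : ∑ j, y' j * (f x' - f x) j ≤ F (t - τ) :=
    calc ∑ j, y' j * (f x' - f x) j ≤ ‖f x' - f x‖ :=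
          sum_mul_le_norm_of_mem_stdSimplex hy'0 hy'1 _
      _ ≤ F ‖x' - x‖ := hF x x'
      _ ≤ F (t - τ) := hFmono (norm_nonneg _) (by simp [hτ.2]) (by linarith)
  have hlabel : ∑ j, (y' j - y j) * f x j ≤ M * κ⁻¹ * τ := by
    rw [show M * κ⁻¹ * τ = (∑ j, |y' j - y j|) * M by simp only [τ]; field_simp]
    exact sum_mul_le_sum_abs_mul_of_abs_le (hM x)
  rw [hsplit]
  exact (add_le_add hinput hlabel).trans (le_supConvLinear hFmono hτ)

theorem stmt17 (n m : ℕ) (r : ℝ≥0∞) [Fact (1 ≤ r)]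
    (f : PiLp r (fun _ : Fin n => ℝ) → PiLp r (fun _ : Fin m => ℝ))
    (F : ℝ → ℝ) (hFmono : MonotoneOn F (Set.Ici 0))
    (hFconc : ConcaveOn ℝ (Set.Ici 0) F)
    (hF : ∀ x x', ‖f x' - f x‖ ≤ F ‖x' - x‖)
    (M : ℝ) (hM : ∀ x j, |f x j| ≤ M)
    (κ : ℝ) (hκ : 0 < κ) :
    (∀ (t : ℝ) (x x' : PiLp r (fun _ : Fin n => ℝ)) (y y' : Fin m → ℝ),
      (∀ j, 0 ≤ y j) → (∑ j, y j = 1) → (∀ j, 0 ≤ y' j) → (∑ j, y' j = 1) →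
      ‖x' - x‖ + κ * (∑ j, |y' j - y j|) ≤ t →
      (∑ j, y' j * f x' j) - (∑ j, y j * f x j) ≤
        ⨆ τ : Set.Icc (0:ℝ) t, (F (t - (τ:ℝ)) + M * κ⁻¹ * (τ:ℝ))) ∧
    MonotoneOn (fun t => ⨆ τ : Set.Icc (0:ℝ) t, (F (t - (τ:ℝ)) + M * κ⁻¹ * (τ:ℝ)))
      (Set.Ici 0) ∧
    ConcaveOn ℝ (Set.Ici 0)
      (fun t => ⨆ τ : Set.Icc (0:ℝ) t, (F (t - (τ:ℝ)) + M * κ⁻¹ * (τ:ℝ))) :=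
  ⟨fun _ _ _ _ _ _ _ hy'0 hy'1 ht =>
      sum_mul_sub_sum_mul_le_supConvLinear hFmono hF hM hκ hy'0 hy'1 ht,
    monotoneOn_supConvLinear hFmono,
    concaveOn_supConvLinear hFmono hFconc⟩
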